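/- (Random drop preserves a quarter of the value) Let x* be a feasible bundling-based AVA solution decomposed into permissible bundles. Suppose for each item independently we keep, with probability 1/2 each, either all its P-edges or all its N-edges. Let x' be the solution that retains a P-edge (p,j) of x* iff it was kept, and retains an N-edge (i,j) of x* iff both it was kept and the P-edge of its bundle was kept. Then x' is feasible for the resulting unambiguous sub-instance, and E[v·x'] = (1/2)·v·x*_P + (1/4)·v·x*_N, where x*_P and x*_N denote the P-edge and N-edge parts of x*. -/
import Mathlib


variable {I J : Type*} [Fintype I] [Fintype J] [DecidableEq I] [DecidableEq J]

/-- Feasibility of an allocation for an AVA instance. -/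
def Feasible (v : I → J → ℝ) (ρ : J → ℝ) (x : I → Option J) : Prop :=
  ∀ j : J, ρ j * ((Finset.univ.filter fun i => x i = some j).card : ℝ) ≤
    ∑ i ∈ Finset.univ.filter fun i => x i = some j, v i j

/-- The value an item contributes under an allocation. -/
def itemValue (v : I → J → ℝ) (x : I → Option J) (i : I) : ℝ :=
  ((x i).map (v i)).getD 0

/-- Total value of an allocation. -/
def totalValue (v : I → J → ℝ) (x : I → Option J) : ℝ :=
  ∑ i, itemValue v x i

/-- The solution obtained from keeping decisions `c : I → Bool`: an item `i`
that is the P-item of its bundle (`g i = i`) is retained iff its P-edges are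
kept (`c i = true`); an N-item of a bundle is retained iff its N-edges are
kept (`c i = false`) and the P-edges of its bundle's P-item are kept. -/
def dropSol (x : I → Option J) (g : I → I) (c : I → Bool) : I → Option J :=
  fun i =>
    if (g i = i ∧ c i = true) ∨ (g i ≠ i ∧ c i = false ∧ c (g i) = true) then x i
    else none

lemma sum_coin_one (i : I) (a : ℝ) :
    ∑ c : I → Bool, (if c i = true then a else 0)
      = (2 : ℝ) ^ Fintype.card I / 2 * a := by
  have key : ∑ c : I → Bool, (if c i = true then (1 : ℝ) else 0)
      = (2 : ℝ) ^ (Fintype.card I - 1) := by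
    have h1 : ∀ c : I → Bool, (if c i = true then (1 : ℝ) else 0)
        = ∏ k, (if k = i then (if c k = true then (1 : ℝ) else 0) else 1) := by
      intro c
      rw [Finset.prod_ite_eq' Finset.univ i (fun k => if c k = true then (1 : ℝ) else 0)]
      simp
    simp_rw [h1]
    rw [← Fintype.prod_sum (fun k (b : Bool) => if k = i then (if b = true then (1 : ℝ) else 0) else 1)]
    have h2 : ∀ k : I, (∑ b : Bool, (if k = i then (if b = true then (1 : ℝ) else 0) else 1))
        = if k = i then 1 else 2 := by
      intro k
      by_cases hk : k = i <;> simp [hk, Fintype.sum_bool]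
    simp_rw [h2]
    have h4 : ∏ k ∈ Finset.univ.erase i, (if k = i then (1 : ℝ) else 2)
        = (2 : ℝ) ^ (Fintype.card I - 1) := by
      rw [Finset.prod_congr rfl (fun k hk => if_neg (Finset.ne_of_mem_erase hk)),
        Finset.prod_const, Finset.card_erase_of_mem (Finset.mem_univ i), Finset.card_univ]
    rw [← Finset.mul_prod_erase Finset.univ _ (Finset.mem_univ i), h4]
    simp
  have hn : 1 ≤ Fintype.card I := Fintype.card_pos_iff.mpr ⟨i⟩
  have h3 : (2 : ℝ) ^ (Fintype.card I - 1) = (2 : ℝ) ^ Fintype.card I / 2 := by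
    rw [eq_div_iff (by norm_num), ← pow_succ, Nat.sub_add_cancel hn]
  calc ∑ c : I → Bool, (if c i = true then a else 0)
      = ∑ c : I → Bool, (if c i = true then (1 : ℝ) else 0) * a := by
        apply Finset.sum_congr rfl; intro c _; by_cases h : c i = true <;> simp [h]
    _ = (2 : ℝ) ^ Fintype.card I / 2 * a := by rw [← Finset.sum_mul, key, h3]

lemma sum_coin_two (i p : I) (hip : i ≠ p) (a : ℝ) :
    ∑ c : I → Bool, (if c i = false ∧ c p = true then a else 0)
      = (2 : ℝ) ^ Fintype.card I / 4 * a := by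
  have hp : p ∈ Finset.univ.erase i := Finset.mem_erase.mpr ⟨(Ne.symm hip), Finset.mem_univ p⟩
  have key : ∑ c : I → Bool, (if c i = false ∧ c p = true then (1 : ℝ) else 0)
      = (2 : ℝ) ^ (Fintype.card I - 2) := by
    have h1 : ∀ c : I → Bool, (if c i = false ∧ c p = true then (1 : ℝ) else 0)
        = ∏ k, (if k = i then (if c k = false then (1 : ℝ) else 0)
            else if k = p then (if c k = true then (1 : ℝ) else 0) else 1) := by
      intro c
      have h5 : ∏ k ∈ (Finset.univ.erase i).erase p, (if k = i then (if c k = false then (1 : ℝ) else 0)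
          else if k = p then (if c k = true then (1 : ℝ) else 0) else 1) = 1 := by
        apply Finset.prod_eq_one
        intro k hk
        have hk1 : k ≠ p := Finset.ne_of_mem_erase hk
        have hk2 : k ≠ i := Finset.ne_of_mem_erase (Finset.mem_of_mem_erase hk)
        simp [hk1, hk2]
      rw [← Finset.mul_prod_erase Finset.univ _ (Finset.mem_univ i),
        ← Finset.mul_prod_erase _ _ hp, h5]
      simp only [if_pos rfl, if_neg (Ne.symm hip), mul_one]
      by_cases h1 : c i = false <;> by_cases h2 : c p = true <;> simp [h1, h2]
    simp_rw [h1]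
    rw [← Fintype.prod_sum (fun k (b : Bool) => if k = i then (if b = false then (1 : ℝ) else 0)
        else if k = p then (if b = true then (1 : ℝ) else 0) else 1)]
    have h2 : ∀ k : I, (∑ b : Bool, (if k = i then (if b = false then (1 : ℝ) else 0)
        else if k = p then (if b = true then (1 : ℝ) else 0) else 1))
        = if k = i then 1 else if k = p then 1 else 2 := by
      intro k
      by_cases hk : k = i <;> by_cases hk' : k = p <;> simp [hk, hk', Fintype.sum_bool] <;> norm_num
    simp_rw [h2]
    have h6 : ∏ k ∈ (Finset.univ.erase i).erase p, (if k = i then (1:ℝ) else if k = p then 1 else 2)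
        = (2 : ℝ) ^ (Fintype.card I - 2) := by
      have hall : ∀ k ∈ (Finset.univ.erase i).erase p,
          (if k = i then (1:ℝ) else if k = p then 1 else 2) = 2 := by
        intro k hk
        have hk1 : k ≠ p := Finset.ne_of_mem_erase hk
        have hk2 : k ≠ i := Finset.ne_of_mem_erase (Finset.mem_of_mem_erase hk)
        simp [hk1, hk2]
      rw [Finset.prod_congr rfl hall, Finset.prod_const,
        Finset.card_erase_of_mem hp, Finset.card_erase_of_mem (Finset.mem_univ i), Finset.card_univ,
        Nat.sub_sub]
    rw [← Finset.mul_prod_erase Finset.univ _ (Finset.mem_univ i),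
      ← Finset.mul_prod_erase _ _ hp, h6]
    simp [Ne.symm hip]
  have hn : 2 ≤ Fintype.card I := Fintype.one_lt_card_iff.mpr ⟨i, p, hip⟩
  have h3 : (2 : ℝ) ^ (Fintype.card I - 2) = (2 : ℝ) ^ Fintype.card I / 4 := by
    rw [eq_div_iff (by norm_num)]
    have h4 : (4 : ℝ) = 2 ^ 2 := by norm_num
    rw [h4, ← pow_add, Nat.sub_add_cancel hn]
  calc ∑ c : I → Bool, (if c i = false ∧ c p = true then a else 0)
      = ∑ c : I → Bool, (if c i = false ∧ c p = true then (1 : ℝ) else 0) * a := by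
        apply Finset.sum_congr rfl; intro c _
        by_cases h : c i = false ∧ c p = true <;> simp [h]
    _ = (2 : ℝ) ^ Fintype.card I / 4 * a := by rw [← Finset.sum_mul, key, h3]


/-- Random drop preserves a quarter of the value: for a bundling-based solution
`x` (with bundle map `g`), every realization of the keep coins yields a
feasible solution, and the expectation over uniform independent coins equals
`(1/2)·v·x_P + (1/4)·v·x_N`. -/
theorem stmt_4 (v : I → J → ℝ) (ρ : J → ℝ)
    (hv : ∀ i j, 0 ≤ v i j) (hρ : ∀ j, 0 ≤ ρ j)
    (x : I → Option J) (g : I → I)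
    (hfeas : Feasible v ρ x)
    (hg : ∀ i j, x i = some j →
      x (g i) = some j ∧ ρ j ≤ v (g i) j ∧ g (g i) = g i ∧ (g i ≠ i → v i j < ρ j))
    (hbundle : ∀ j p, x p = some j → g p = p →
      ρ j * ((Finset.univ.filter fun i => x i = some j ∧ g i = p).card : ℝ) ≤
        ∑ i ∈ Finset.univ.filter fun i => x i = some j ∧ g i = p, v i j) :
    (∀ c : I → Bool, Feasible v ρ (dropSol x g c)) ∧
    (∑ c : I → Bool, totalValue v (dropSol x g c)) =
      ((2 : ℝ) ^ Fintype.card I) *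
        ((1 / 2) * (∑ i ∈ Finset.univ.filter fun i => g i = i, itemValue v x i) +
         (1 / 4) * (∑ i ∈ Finset.univ.filter fun i => g i ≠ i, itemValue v x i)) := by
  constructor
  · intro c j
    set S := Finset.univ.filter (fun i => dropSol x g c i = some j) with hS
    have hmem : ∀ i ∈ S, x i = some j ∧ c (g i) = true := by
      intro i hi
      simp only [hS, Finset.mem_filter] at hi
      obtain ⟨-, hi⟩ := hi
      unfold dropSol at hi
      split at hi
      · rename_i h
        refine ⟨hi, ?_⟩
        rcases h with ⟨h1, h2⟩ | ⟨h1, h2, h3⟩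
        · rw [h1]; exact h2
        · exact h3
      · exact absurd hi (by simp)
    rw [Finset.card_eq_sum_card_fiberwise (f := g) (t := Finset.univ)
        (fun i _ => Finset.mem_univ _),
      ← Finset.sum_fiberwise_of_maps_to (g := g) (fun i _ => Finset.mem_univ _) (fun i => v i j)]
    push_cast
    rw [Finset.mul_sum]
    apply Finset.sum_le_sum
    intro p _
    set K := S.filter (fun i => g i = p) with hK
    by_cases hKne : K.Nonempty
    · obtain ⟨i0, hi0⟩ := hKne
      rw [hK, Finset.mem_filter] at hi0
      obtain ⟨hi0S, hgi0⟩ := hi0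
      obtain ⟨hxi0, hci0⟩ := hmem i0 hi0S
      have hcp : c p = true := hgi0 ▸ hci0
      obtain ⟨hxgi0, -, hggi0, -⟩ := hg i0 j hxi0
      have hxp : x p = some j := hgi0 ▸ hxgi0
      have hgp : g p = p := by rw [← hgi0]; exact hgi0 ▸ hggi0
      have hpK : p ∈ K := by
        rw [hK, Finset.mem_filter, hS, Finset.mem_filter]
        refine ⟨⟨Finset.mem_univ _, ?_⟩, hgp⟩
        unfold dropSol
        rw [if_pos (Or.inl ⟨hgp, hcp⟩)]
        exact hxp
      set B := Finset.univ.filter (fun i => x i = some j ∧ g i = p) with hB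
      have hKB : K ⊆ B := by
        intro i hi
        rw [hK, Finset.mem_filter] at hi
        rw [hB, Finset.mem_filter]
        exact ⟨Finset.mem_univ _, (hmem i hi.1).1, hi.2⟩
      have hdropv : ∀ i ∈ B \ K, v i j ≤ ρ j := by
        intro i hi
        rw [Finset.mem_sdiff, hB, Finset.mem_filter] at hi
        obtain ⟨⟨-, hxi, hgi⟩, hiK⟩ := hi
        have hip : i ≠ p := by rintro rfl; exact hiK hpK
        exact ((hg i j hxi).2.2.2 (by rw [hgi]; exact hip.symm)).le
      have hsplit : ∑ i ∈ B \ K, v i j + ∑ i ∈ K, v i j = ∑ i ∈ B, v i j :=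
        Finset.sum_sdiff hKB
      have hcards : (B \ K).card + K.card = B.card :=
        Finset.card_sdiff_add_card_eq_card hKB
      have hbd := hbundle j p hxp hgp
      have hBK : ∑ i ∈ B \ K, v i j ≤ ρ j * ((B \ K).card : ℝ) := by
        have h := Finset.sum_le_card_nsmul (B \ K) (fun i => v i j) (ρ j) hdropv
        rw [nsmul_eq_mul] at h
        linarith [h]
      have hc : ((B \ K).card : ℝ) + (K.card : ℝ) = (B.card : ℝ) := by exact_mod_cast hcards
      have hexp : ρ j * (B.card : ℝ) = ρ j * ((B \ K).card : ℝ) + ρ j * (K.card : ℝ) := by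
        rw [← hc]; ring
      linarith
    · rw [Finset.not_nonempty_iff_eq_empty] at hKne
      simp [hKne]
  · unfold totalValue
    rw [Finset.sum_comm]
    have hitem : ∀ c (i : I), itemValue v (dropSol x g c) i =
        if (g i = i ∧ c i = true) ∨ (g i ≠ i ∧ c i = false ∧ c (g i) = true)
        then itemValue v x i else 0 := by
      intro c i
      unfold itemValue dropSol
      split <;> simp
    have hrow : ∀ i : I, ∑ c : I → Bool, itemValue v (dropSol x g c) i =
        if g i = i then (2 : ℝ) ^ Fintype.card I / 2 * itemValue v x i
        else (2 : ℝ) ^ Fintype.card I / 4 * itemValue v x i := by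
      intro i
      by_cases hgi : g i = i
      · rw [if_pos hgi, ← sum_coin_one i (itemValue v x i)]
        apply Finset.sum_congr rfl
        intro c _
        rw [hitem c i]
        apply if_congr _ rfl rfl
        simp [hgi]
      · rw [if_neg hgi, ← sum_coin_two i (g i) (fun h => hgi h.symm) (itemValue v x i)]
        apply Finset.sum_congr rfl
        intro c _
        rw [hitem c i]
        apply if_congr _ rfl rfl
        simp [hgi]
    simp_rw [hrow]
    rw [← Finset.sum_filter_add_sum_filter_not Finset.univ (fun i => g i = i)]
    have e1 : ∑ i ∈ Finset.univ.filter (fun i => g i = i),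
        (if g i = i then (2 : ℝ) ^ Fintype.card I / 2 * itemValue v x i
          else (2 : ℝ) ^ Fintype.card I / 4 * itemValue v x i)
        = (2 : ℝ) ^ Fintype.card I / 2 * ∑ i ∈ Finset.univ.filter (fun i => g i = i),
            itemValue v x i := by
      rw [Finset.mul_sum]
      apply Finset.sum_congr rfl
      intro i hi
      rw [if_pos (Finset.mem_filter.mp hi).2]
    have e2 : ∑ i ∈ Finset.univ.filter (fun i => ¬g i = i),
        (if g i = i then (2 : ℝ) ^ Fintype.card I / 2 * itemValue v x i
          else (2 : ℝ) ^ Fintype.card I / 4 * itemValue v x i)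
        = (2 : ℝ) ^ Fintype.card I / 4 * ∑ i ∈ Finset.univ.filter (fun i => g i ≠ i),
            itemValue v x i := by
      rw [Finset.mul_sum]
      apply Finset.sum_congr rfl
      intro i hi
      rw [if_neg (Finset.mem_filter.mp hi).2]
    rw [e1, e2]
    ring
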